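/- A self-adjoint operator admits no proper generalized symmetric extension. Let A be a densely defined self-adjoint operator on a complex Hilbert space H (A equals its adjoint). Let K be a complex Hilbert space, J : H → K a linear isometry, and B a densely defined symmetric operator on K such that Jx belongs to the domain of B and B(Jx) = J(Ax) for every x in the domain of A. Assume that every closed subspace K₀ of K that is orthogonal to the range of J and reduces B is the zero subspace. Then J is surjective and the domain of B equals the image under J of the domain of A (so B is the copy of A under the identification J). -/

import Mathlib

/-- The orthogonal projection of `K` onto a closed subspace `K₀`, as an operator `K →L[ℂ] K`. -/
noncomputable def projOf {K : Type*} [NormedAddCommGroup K] [InnerProductSpace ℂ K]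
    [CompleteSpace K] (K₀ : Submodule ℂ K) (hc : IsClosed (K₀ : Set K)) : K →L[ℂ] K :=
  haveI : CompleteSpace K₀ := hc.completeSpace_coe
  K₀.subtypeL.comp K₀.orthogonalProjection

/-- A closed subspace `K₀` (with projector `P₀`) reduces the operator `B` if `P₀` maps the
domain of `B` into itself and `B P₀ x = P₀ B x` for all `x` in the domain of `B`. -/
def ReducesPMap {K : Type*} [NormedAddCommGroup K] [InnerProductSpace ℂ K] [CompleteSpace K]
    (B : K →ₗ.[ℂ] K) (K₀ : Submodule ℂ K) (hc : IsClosed (K₀ : Set K)) : Prop :=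
  (∀ x : B.domain, projOf K₀ hc (x : K) ∈ B.domain) ∧
  ∀ (x : B.domain) (h : projOf K₀ hc (x : K) ∈ B.domain),
    B ⟨projOf K₀ hc (x : K), h⟩ = projOf K₀ hc (B x)

/-- A (partially defined) operator is symmetric if `⟪Bx, y⟫ = ⟪x, By⟫` on its domain. -/
def IsSymmetricPMap {K : Type*} [NormedAddCommGroup K] [InnerProductSpace ℂ K]
    (B : K →ₗ.[ℂ] K) : Prop :=
  ∀ x y : B.domain, (inner ℂ (B x) ((y : K)) : ℂ) = inner ℂ ((x : K)) (B y)

/-!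
With `J†` the adjoint of `J`, `J J†` is the orthogonal projection onto the range of `J`.
For `y` in the domain of `B` and `x` in that of `A`, symmetry of `B` gives
`⟪J† B y, x⟫ = ⟪y, B J x⟫ = ⟪y, J A x⟫ = ⟪J† y, A x⟫`, so self-adjointness of `A` puts `J† y`
in the domain of `A` with `A J† y = J† B y`. Hence `1 - J J†` maps the domain of `B` into
itself and commutes with `B` there: the orthocomplement of the range of `J` reduces `B`, so it
vanishes, i.e. `J J† = 1`.
-/

open scoped InnerProductSpace LinearPMap

namespace LinearIsometry

variable {H K : Type*} [NormedAddCommGroup H] [InnerProductSpace ℂ H] [CompleteSpace H]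
  [NormedAddCommGroup K] [InnerProductSpace ℂ K] [CompleteSpace K] (J : H →ₗᵢ[ℂ] K)

theorem sub_apply_adjoint_mem_orthogonal_range (y : K) :
    y - J (J.toContinuousLinearMap.adjoint y) ∈ (LinearMap.range J.toLinearMap)ᗮ := by
  rintro _ ⟨x, rfl⟩
  rw [inner_sub_right, coe_toLinearMap, inner_map_map, ContinuousLinearMap.adjoint_inner_right,
    coe_toContinuousLinearMap, sub_self]

theorem projOf_orthogonal_range (hc : IsClosed ((LinearMap.range J.toLinearMap)ᗮ : Set K))
    (y : K) :
    projOf (LinearMap.range J.toLinearMap)ᗮ hc y = y - J (J.toContinuousLinearMap.adjoint y) :=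
  Submodule.eq_starProjection_of_mem_orthogonal' (J.sub_apply_adjoint_mem_orthogonal_range y)
    (Submodule.le_orthogonal_orthogonal _ (LinearMap.mem_range_self _ _)) (sub_add_cancel _ _).symm

end LinearIsometry

theorem IsSelfAdjoint.mem_graph_of_inner_eq {H : Type*} [NormedAddCommGroup H]
    [InnerProductSpace ℂ H] [CompleteSpace H] {A : H →ₗ.[ℂ] H} (hA : IsSelfAdjoint A)
    {u w : H}
    (h : ∀ x : A.domain, ⟪w, (x : H)⟫_ℂ = ⟪u, A x⟫_ℂ) : (u, w) ∈ A.graph := by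
  have hu : u ∈ A†.domain := LinearPMap.mem_adjoint_domain_of_exists u ⟨w, h⟩
  rw [← hA.star_eq]
  exact (LinearPMap.image_iff hu).mp
    (LinearPMap.adjoint_apply_eq hA.dense_domain ⟨u, hu⟩ h).symm

section SymmetricExtension

variable {H K : Type*} [NormedAddCommGroup H] [InnerProductSpace ℂ H] [CompleteSpace H]
  [NormedAddCommGroup K] [InnerProductSpace ℂ K] [CompleteSpace K]
  {A : H →ₗ.[ℂ] H} {J : H →ₗᵢ[ℂ] K} {B : K →ₗ.[ℂ] K}
  (hmem : ∀ x : A.domain, J (x : H) ∈ B.domain)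
  (hext : ∀ (x : A.domain) (h : J (x : H) ∈ B.domain), B ⟨J (x : H), h⟩ = J (A x))
include hmem hext

theorem adjoint_mem_graph_of_isSymmetricPMap (hA : IsSelfAdjoint A) (hB : IsSymmetricPMap B)
    (y : B.domain) :
    (J.toContinuousLinearMap.adjoint y, J.toContinuousLinearMap.adjoint (B y)) ∈ A.graph := by
  refine hA.mem_graph_of_inner_eq fun x ↦ ?_
  calc ⟪J.toContinuousLinearMap.adjoint (B y), (x : H)⟫_ℂ
      = ⟪B y, J (x : H)⟫_ℂ := ContinuousLinearMap.adjoint_inner_left _ _ _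
    _ = ⟪(y : K), B ⟨J (x : H), hmem x⟩⟫_ℂ := hB y ⟨J x, hmem x⟩
    _ = ⟪(y : K), J (A x)⟫_ℂ := by rw [hext]
    _ = ⟪J.toContinuousLinearMap.adjoint y, A x⟫_ℂ := by
      rw [ContinuousLinearMap.adjoint_inner_left]; rfl

theorem reducesPMap_orthogonal_range (hA : IsSelfAdjoint A) (hB : IsSymmetricPMap B)
    (hc : IsClosed ((LinearMap.range J.toLinearMap)ᗮ : Set K)) :
    ReducesPMap B (LinearMap.range J.toLinearMap)ᗮ hc := by
  have hgraph := adjoint_mem_graph_of_isSymmetricPMap hmem hext hA hB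
  have hdom y := LinearPMap.mem_domain_of_mem_graph (hgraph y)
  refine ⟨fun y ↦ ?_, fun y h ↦ ?_⟩
  · rw [J.projOf_orthogonal_range]
    exact B.domain.sub_mem y.2 (hmem ⟨_, hdom y⟩)
  · let u : A.domain := ⟨_, hdom y⟩
    have hsub : (⟨projOf _ hc y, h⟩ : B.domain) = y - ⟨J u, hmem u⟩ :=
      Subtype.ext (J.projOf_orthogonal_range hc y)
    rw [hsub, LinearPMap.map_sub, hext, ← (LinearPMap.image_iff (hdom y)).mpr (hgraph y),
      J.projOf_orthogonal_range]

end SymmetricExtension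

theorem selfAdjoint_no_proper_generalized_symmetric_extension_general
    {H K : Type*} [NormedAddCommGroup H] [InnerProductSpace ℂ H] [CompleteSpace H]
    [NormedAddCommGroup K] [InnerProductSpace ℂ K] [CompleteSpace K]
    (A : H →ₗ.[ℂ] H) (hA : A.adjoint = A)
    (J : H →ₗᵢ[ℂ] K) (B : K →ₗ.[ℂ] K)
    (hBsymm : IsSymmetricPMap B)
    (hmem : ∀ x : A.domain, J (x : H) ∈ B.domain)
    (hext : ∀ (x : A.domain) (h : J (x : H) ∈ B.domain), B ⟨J (x : H), h⟩ = J (A x))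
    (hred : ∀ (K₀ : Submodule ℂ K) (hc : IsClosed (K₀ : Set K)),
      K₀ ≤ (LinearMap.range J.toLinearMap)ᗮ → ReducesPMap B K₀ hc → K₀ = ⊥) :
    Function.Surjective J ∧ B.domain = A.domain.map J.toLinearMap := by
  have hbot : (LinearMap.range J.toLinearMap)ᗮ = ⊥ := hred _ (Submodule.isClosed_orthogonal _)
    le_rfl (reducesPMap_orthogonal_range hmem hext hA hBsymm _)
  have hJJ (z : K) : J (J.toContinuousLinearMap.adjoint z) = z := by
    have hz := J.sub_apply_adjoint_mem_orthogonal_range z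
    rwa [hbot, Submodule.mem_bot, sub_eq_zero, eq_comm] at hz
  refine ⟨fun z ↦ ⟨_, hJJ z⟩, le_antisymm (fun z hz ↦ ?_)
    (Submodule.map_le_iff_le_comap.mpr fun x hx ↦ hmem ⟨x, hx⟩)⟩
  have hgraph := adjoint_mem_graph_of_isSymmetricPMap hmem hext hA hBsymm ⟨z, hz⟩
  exact ⟨_, LinearPMap.mem_domain_of_mem_graph hgraph, hJJ z⟩

/-- **A self-adjoint operator admits no proper generalized symmetric extension.**
If `A` is self-adjoint on `H`, `J : H → K` a linear isometry, and `B` a densely defined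
symmetric operator on `K` extending `A` through `J` such that no nonzero closed subspace of
`K` orthogonal to the range of `J` reduces `B`, then `J` is surjective and the domain of `B`
is the `J`-image of the domain of `A`. -/
theorem selfAdjoint_no_proper_generalized_symmetric_extension
    {H K : Type*} [NormedAddCommGroup H] [InnerProductSpace ℂ H] [CompleteSpace H]
    [NormedAddCommGroup K] [InnerProductSpace ℂ K] [CompleteSpace K]
    (A : H →ₗ.[ℂ] H) (hA : A.adjoint = A)
    (J : H →ₗᵢ[ℂ] K) (B : K →ₗ.[ℂ] K)
    (hBsymm : IsSymmetricPMap B) (hBdense : Dense (B.domain : Set K))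
    (hmem : ∀ x : A.domain, J (x : H) ∈ B.domain)
    (hext : ∀ (x : A.domain) (h : J (x : H) ∈ B.domain), B ⟨J (x : H), h⟩ = J (A x))
    (hred : ∀ (K₀ : Submodule ℂ K) (hc : IsClosed (K₀ : Set K)),
      K₀ ≤ (LinearMap.range J.toLinearMap)ᗮ → ReducesPMap B K₀ hc → K₀ = ⊥) :
    Function.Surjective J ∧ B.domain = A.domain.map J.toLinearMap :=
  selfAdjoint_no_proper_generalized_symmetric_extension_general A hA J B hBsymm hmem hext hred
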